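/- Let d = 3 and let (V, w) be a lattice whose component random variables X₁, X₂, X₃ take values in {-1, 0, 1}. Suppose that for all pairwise distinct α, β, γ ∈ {1,2,3} there exist constants c ∈ [0, 1/72] and c_α, c_β, c_γ ∈ [-1/72, 1/72] such that: P(X_α = 0) = 2/3 and P(X_α = ±1) = 1/6; P(X_α = X_β = 0) = 4/9; P(X_α = σ_α, X_β = 0) = 1/9 for σ_α ∈ {-1,1}; P(X_α = σ_α, X_β = σ_β) = 1/36 for σ_α, σ_β ∈ {-1,1}; P(X_α = X_β = X_γ = 0) = 1/3 − 8c; P(X_α = σ_α, X_β = X_γ = 0) = 1/18 + 4c + 4σ_α c_α; P(X_α = σ_α, X_β = σ_β, X_γ = 0) = 1/36 − 2c − 2σ_α c_α − 2σ_β c_β; and P(X_α = σ_α, X_β = σ_β, X_γ = σ_γ) = c + σ_α c_α + σ_β c_β + σ_γ c_γ for σ's in {-1,1}. Then (V, w) is an isotropic lattice with speed of sound c_s = 3^{-1/2}. -/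

import Mathlib

/-!
Write `ψ(s) = 3 s² - 2`. On `{-1, 0, 1}³` the prescribed triple probabilities are the weights of
the D3Q27 product lattice `(2/3, 1/6, 1/6)^⊗3` plus the perturbations `(c - 1/216) ∏ₖ ψ(xₖ)` and
`c_a x_a ∏_{k ≠ a} ψ(xₖ)`. On `{-1, 0, 1}` the profile `ψ` is orthogonal to `1`, `s` and `s³`,
and a monomial of degree at most four in three variables always has a coordinate of exponent zero
or odd (and, for the second kind, its `a`-th exponent is even or another one is zero or odd), so
the perturbations do not change any moment of order at most four. The moments of the product law
factor into the one-dimensional moments `1, 0, 1/3, 0, 1/3`, which are isotropic with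
`c_s² = 1/3`.
-/

open Real Set
noncomputable section

abbrev Spc (d : ℕ) := EuclideanSpace ℝ (Fin d)

/-- Kronecker delta. -/
def kron {d : ℕ} (α β : Fin d) : ℝ := if α = β then 1 else 0

/-- An isotropic lattice `(𝒱, w)` with speed of sound `cs`: pairwise distinct velocities
`v i` (with `v 0 = 0`) and strictly positive weights satisfying the five isotropy summation
(moment) conditions. -/
structure IsoLattice (d n : ℕ) (v : Fin (n + 1) → Spc d) (w : Fin (n + 1) → ℝ) (cs : ℝ) :
    Prop where
  cs_pos : 0 < cs
  w_pos : ∀ i, 0 < w i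
  v_zero : v 0 = 0
  v_inj : Function.Injective v
  sum_w : ∑ i, w i = 1
  sum_wv : ∀ α : Fin d, ∑ i, w i * v i α = 0
  sum_wvv : ∀ α β : Fin d, ∑ i, w i * (v i α * v i β) = cs ^ 2 * kron α β
  sum_wvvv : ∀ α β γ : Fin d, ∑ i, w i * (v i α * v i β * v i γ) = 0
  sum_wvvvv : ∀ α β γ ζ : Fin d, ∑ i, w i * (v i α * v i β * v i γ * v i ζ) =
    cs ^ 4 * (kron α β * kron γ ζ + kron α γ * kron β ζ + kron α ζ * kron β γ)

open Classical in
/-- The probability `P(S)` of an event `S ⊆ Ω = {0,…,n}` on the finite probability space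
associated with a lattice with weights `w` (`P({i}) = wᵢ`). -/
def probOf (n : ℕ) (w : Fin (n + 1) → ℝ) (S : Fin (n + 1) → Prop) : ℝ :=
  ∑ i, if S i then w i else 0

open Finset

theorem sum_mul_eq_sum_mul_probOf {β : Type*} {n : ℕ} (w : Fin (n + 1) → ℝ)
    (f : Fin (n + 1) → β) (T : Finset β) (hf : ∀ i, f i ∈ T) (g : β → ℝ) :
    ∑ i, w i * g (f i) = ∑ x ∈ T, g x * probOf n w (fun i => f i = x) := by
  classical
  rw [← sum_fiberwise_of_maps_to (fun i _ => hf i)]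
  refine sum_congr rfl fun x _ => ?_
  rw [probOf, mul_sum, sum_filter]
  refine sum_congr rfl fun i _ => ?_
  split_ifs with h
  · rw [h, mul_comm]
  · rw [mul_zero]

theorem prod_comp_eq_prod_pow_card {ι κ M : Type*} [Fintype ι] [Fintype κ] [DecidableEq κ]
    [CommMonoid M] (α : ι → κ) (x : κ → M) :
    ∏ j, x (α j) = ∏ k, x k ^ #{j | α j = k} := by
  rw [← prod_fiberwise' univ α x]
  simp only [prod_const]

def trit : Finset ℝ := {-1, 0, 1}

theorem sum_trit (f : ℝ → ℝ) : ∑ s ∈ trit, f s = f (-1) + f 0 + f 1 := by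
  rw [trit, sum_insert (by norm_num), sum_insert (by norm_num), sum_singleton, add_assoc]

def d1q3Weight (s : ℝ) : ℝ := 2 / 3 - s ^ 2 / 2

def d1q3Moment (m : ℕ) : ℝ := ∑ s ∈ trit, s ^ m * d1q3Weight s

@[simp] theorem d1q3Moment_zero : d1q3Moment 0 = 1 := by
  simp only [d1q3Moment, sum_trit, d1q3Weight]; norm_num
@[simp] theorem d1q3Moment_one : d1q3Moment 1 = 0 := by
  simp only [d1q3Moment, sum_trit, d1q3Weight]; norm_num
@[simp] theorem d1q3Moment_two : d1q3Moment 2 = 1 / 3 := by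
  simp only [d1q3Moment, sum_trit, d1q3Weight]; norm_num
@[simp] theorem d1q3Moment_three : d1q3Moment 3 = 0 := by
  simp only [d1q3Moment, sum_trit, d1q3Weight]; norm_num
@[simp] theorem d1q3Moment_four : d1q3Moment 4 = 1 / 3 := by
  simp only [d1q3Moment, sum_trit, d1q3Weight]; norm_num

def indexCount {r : ℕ} (α : Fin r → Fin 3) (k : Fin 3) : ℕ := #{j | α j = k}

def d3q27Moment {r : ℕ} (α : Fin r → Fin 3) : ℝ := ∏ k, d1q3Moment (indexCount α k)

theorem d3q27Moment_eq_prod_sum_ite {r : ℕ} (α : Fin r → Fin 3) : d3q27Moment α =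
    d1q3Moment (∑ j, if α j = 0 then 1 else 0) * d1q3Moment (∑ j, if α j = 1 then 1 else 0) *
      d1q3Moment (∑ j, if α j = 2 then 1 else 0) := by
  simp only [d3q27Moment, indexCount, card_filter, Fin.prod_univ_three]

theorem d3q27Moment_one (α : Fin 3) : d3q27Moment ![α] = 0 := by
  rw [d3q27Moment_eq_prod_sum_ite]
  fin_cases α <;>
    simp only [Fin.sum_univ_succ, Fin.sum_univ_zero, Matrix.cons_val_zero, Matrix.cons_val_succ] <;>
    norm_num [Fin.ext_iff]

theorem d3q27Moment_two (α β : Fin 3) : d3q27Moment ![α, β] = 1 / 3 * kron α β := by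
  rw [d3q27Moment_eq_prod_sum_ite]
  fin_cases α <;> fin_cases β <;>
    simp only [Fin.sum_univ_succ, Fin.sum_univ_zero, Matrix.cons_val_zero, Matrix.cons_val_succ] <;>
    norm_num [kron, Fin.ext_iff]

theorem d3q27Moment_three (α β γ : Fin 3) : d3q27Moment ![α, β, γ] = 0 := by
  rw [d3q27Moment_eq_prod_sum_ite]
  fin_cases α <;> fin_cases β <;> fin_cases γ <;>
    simp only [Fin.sum_univ_succ, Fin.sum_univ_zero, Matrix.cons_val_zero, Matrix.cons_val_succ] <;>
    norm_num [Fin.ext_iff]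

theorem d3q27Moment_four (α β γ ζ : Fin 3) : d3q27Moment ![α, β, γ, ζ] =
    1 / 9 * (kron α β * kron γ ζ + kron α γ * kron β ζ + kron α ζ * kron β γ) := by
  rw [d3q27Moment_eq_prod_sum_ite]
  fin_cases α <;> fin_cases β <;> fin_cases γ <;> fin_cases ζ <;>
    simp only [Fin.sum_univ_succ, Fin.sum_univ_zero, Matrix.cons_val_zero, Matrix.cons_val_succ] <;>
    norm_num [kron, Fin.ext_iff]

def grid3 : Finset (Fin 3 → ℝ) := Fintype.piFinset fun _ => trit

def zeroSumProfile (s : ℝ) : ℝ := 3 * s ^ 2 - 2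

-- At a point with `z` zero coordinates, `∏ k, d1q3Weight (x k)` is the D3Q27 weight and
-- `∏ k, zeroSumProfile (x k)` is `(-2) ^ z`; this reproduces the table of the triple probabilities
-- (for `c = 0`, `ca = 0` it is the D3Q19 table `1/3, 1/18, 1/36, 0`).
def tripleLaw (c : ℝ) (ca : Fin 3 → ℝ) (x : Fin 3 → ℝ) : ℝ :=
  ∏ k, d1q3Weight (x k) + (c - 1 / 216) * ∏ k, zeroSumProfile (x k) +
    ∑ a, ca a * ∏ k, if k = a then x k else zeroSumProfile (x k)

theorem sum_trit_pow_mul_zeroSumProfile {m : ℕ} (hm : m = 0 ∨ Odd m) :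
    ∑ s ∈ trit, s ^ m * zeroSumProfile s = 0 := by
  rw [sum_trit]
  rcases hm with rfl | hm
  · norm_num [zeroSumProfile]
  · rw [hm.neg_one_pow, zero_pow (by rintro rfl; simp at hm)]
    norm_num [zeroSumProfile]

theorem sum_trit_pow_mul_self {m : ℕ} (hm : Even m) : ∑ s ∈ trit, s ^ m * s = 0 := by
  rw [sum_trit, hm.neg_one_pow]
  norm_num

theorem exists_eq_zero_or_odd (m : Fin 3 → ℕ) (hm : ∑ k, m k ≤ 4) :
    ∃ k, m k = 0 ∨ Odd (m k) := by
  by_contra! h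
  simp only [Nat.not_odd_iff_even, Nat.even_iff] at h
  have := h 0; have := h 1; have := h 2
  rw [Fin.sum_univ_three] at hm
  omega

theorem even_or_exists_ne_eq_zero_or_odd (m : Fin 3 → ℕ) (hm : ∑ k, m k ≤ 4) (a : Fin 3) :
    Even (m a) ∨ ∃ k ≠ a, m k = 0 ∨ Odd (m k) := by
  by_contra! h
  obtain ⟨ha, h⟩ := h
  simp only [Nat.odd_iff, Nat.even_iff] at ha h
  rw [Fin.sum_univ_three] at hm
  obtain rfl | rfl | rfl : a = 0 ∨ a = 1 ∨ a = 2 := by fin_cases a <;> simp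
  · have := h 1 (by decide); have := h 2 (by decide); omega
  · have := h 0 (by decide); have := h 2 (by decide); omega
  · have := h 0 (by decide); have := h 1 (by decide); omega

theorem sum_grid3_prod (f : Fin 3 → ℝ → ℝ) :
    ∑ x ∈ grid3, ∏ k, f k (x k) = ∏ k, ∑ s ∈ trit, f k s :=
  sum_prod_piFinset trit f

theorem sum_grid3_monomial_mul_tripleLaw (c : ℝ) (ca : Fin 3 → ℝ) (m : Fin 3 → ℕ)
    (hm : ∑ k, m k ≤ 4) :
    ∑ x ∈ grid3, (∏ k, x k ^ m k) * tripleLaw c ca x = ∏ k, d1q3Moment (m k) := by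
  have hprod : ∑ x ∈ grid3, (∏ k, x k ^ m k) * ∏ k, d1q3Weight (x k) =
      ∏ k, d1q3Moment (m k) := by
    simp only [← prod_mul_distrib]
    exact sum_grid3_prod fun k s => s ^ m k * d1q3Weight s
  have hsym : ∑ x ∈ grid3, (∏ k, x k ^ m k) * ∏ k, zeroSumProfile (x k) = 0 := by
    simp only [← prod_mul_distrib]
    refine (sum_grid3_prod fun k s => s ^ m k * zeroSumProfile s).trans ?_
    obtain ⟨k, hk⟩ := exists_eq_zero_or_odd m hm
    exact prod_eq_zero (mem_univ k) (sum_trit_pow_mul_zeroSumProfile hk)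
  have hanti (a : Fin 3) : ∑ x ∈ grid3, (∏ k, x k ^ m k) *
      ∏ k, (if k = a then x k else zeroSumProfile (x k)) = 0 := by
    simp only [← prod_mul_distrib]
    refine (sum_grid3_prod fun k s => s ^ m k * if k = a then s else zeroSumProfile s).trans ?_
    rcases even_or_exists_ne_eq_zero_or_odd m hm a with ha | ⟨k, hka, hk⟩
    · exact prod_eq_zero (mem_univ a) (by simpa using sum_trit_pow_mul_self ha)
    · exact prod_eq_zero (mem_univ k) (by simpa [hka] using sum_trit_pow_mul_zeroSumProfile hk)
  calc ∑ x ∈ grid3, (∏ k, x k ^ m k) * tripleLaw c ca x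
      = ∑ x ∈ grid3, (∏ k, x k ^ m k) * ∏ k, d1q3Weight (x k) +
          (c - 1 / 216) * ∑ x ∈ grid3, (∏ k, x k ^ m k) * ∏ k, zeroSumProfile (x k) +
          ∑ a, ca a * ∑ x ∈ grid3, (∏ k, x k ^ m k) *
            ∏ k, (if k = a then x k else zeroSumProfile (x k)) := by
        simp only [tripleLaw, mul_add, sum_add_distrib, mul_sum]
        rw [sum_comm (s := grid3)]
        simp only [mul_left_comm]
    _ = ∏ k, d1q3Moment (m k) := by simp [hprod, hsym, hanti]

theorem probOf_congr {n : ℕ} (w : Fin (n + 1) → ℝ) {S T : Fin (n + 1) → Prop}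
    (h : ∀ i, S i ↔ T i) : probOf n w S = probOf n w T :=
  congrArg _ (funext fun i => propext (h i))

theorem probOf_coords_reorder {n : ℕ} (w : Fin (n + 1) → ℝ) (x : Fin (n + 1) → Fin 3 → ℝ)
    (s t u : ℝ) :
    probOf n w (fun i => x i 1 = t ∧ x i 0 = s ∧ x i 2 = u) =
      probOf n w (fun i => x i 0 = s ∧ x i 1 = t ∧ x i 2 = u) ∧
    probOf n w (fun i => x i 2 = u ∧ x i 0 = s ∧ x i 1 = t) =
      probOf n w (fun i => x i 0 = s ∧ x i 1 = t ∧ x i 2 = u) ∧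
    probOf n w (fun i => x i 0 = s ∧ x i 2 = u ∧ x i 1 = t) =
      probOf n w (fun i => x i 0 = s ∧ x i 1 = t ∧ x i 2 = u) ∧
    probOf n w (fun i => x i 1 = t ∧ x i 2 = u ∧ x i 0 = s) =
      probOf n w (fun i => x i 0 = s ∧ x i 1 = t ∧ x i 2 = u) :=
  ⟨probOf_congr w fun _ => and_left_comm, probOf_congr w fun _ => by tauto,
    probOf_congr w fun _ => by tauto, probOf_congr w fun _ => by tauto⟩

theorem probOf_eq_tripleLaw {n : ℕ} (w : Fin (n + 1) → ℝ) (x : Fin (n + 1) → Fin 3 → ℝ)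
    (c : ℝ) (ca : Fin 3 → ℝ)
    (hcell : ∀ s ∈ trit, ∀ t ∈ trit, ∀ u ∈ trit,
      probOf n w (fun i => x i 0 = s ∧ x i 1 = t ∧ x i 2 = u) = tripleLaw c ca ![s, t, u]) :
    ∀ y ∈ grid3, probOf n w (fun i => x i = y) = tripleLaw c ca y := by
  intro y hy
  rw [grid3, Fintype.mem_piFinset] at hy
  have hy3 : y = ![y 0, y 1, y 2] := by
    ext k
    fin_cases k <;> rfl
  rw [hy3, ← hcell _ (hy 0) _ (hy 1) _ (hy 2)]
  exact probOf_congr w fun i => by simp [funext_iff, Fin.forall_fin_succ]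

theorem sum_mul_prod_eq_d3q27Moment {n r : ℕ} (w : Fin (n + 1) → ℝ)
    (x : Fin (n + 1) → Fin 3 → ℝ) (hx : ∀ i, x i ∈ grid3) (c : ℝ) (ca : Fin 3 → ℝ)
    (hlaw : ∀ y ∈ grid3, probOf n w (fun i => x i = y) = tripleLaw c ca y)
    (α : Fin r → Fin 3) (hr : r ≤ 4) :
    ∑ i, w i * ∏ j, x i (α j) = d3q27Moment α := by
  have hcount : ∑ k, indexCount α k = r := by
    simp only [indexCount, ← card_eq_sum_card_fiberwise (fun j _ => mem_univ (α j)), card_univ,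
      Fintype.card_fin]
  simp only [prod_comp_eq_prod_pow_card α (x _)]
  rw [sum_mul_eq_sum_mul_probOf w x grid3 hx fun y => ∏ k, y k ^ #{j | α j = k}]
  calc ∑ y ∈ grid3, (∏ k, y k ^ #{j | α j = k}) * probOf n w (fun i => x i = y)
      = ∑ y ∈ grid3, (∏ k, y k ^ indexCount α k) * tripleLaw c ca y :=
        sum_congr rfl fun y hy => by rw [hlaw y hy]; rfl
    _ = d3q27Moment α := sum_grid3_monomial_mul_tripleLaw c ca _ (hcount.le.trans hr)

theorem threeD_lattice_isotropic_of_law_general (n : ℕ)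
    (v : Fin (n + 1) → Spc 3) (w : Fin (n + 1) → ℝ)
    -- (𝒱, w) is a lattice …
    (hw : ∀ i, 0 < w i) (hsum : ∑ i, w i = 1) (hv0 : v 0 = 0)
    (hinj : Function.Injective v)
    -- … whose velocity components take values in {-1,0,1}
    (hval : ∀ i, ∀ α : Fin 3, v i α ∈ ({-1, 0, 1} : Set ℝ))
    -- triple laws, for some constants c, c_α, c_β, c_γ
    (h3 : ∀ α β γ : Fin 3, α ≠ β → α ≠ γ → β ≠ γ →
      ∃ c ∈ Icc (0 : ℝ) (1 / 72), ∃ ca ∈ Icc (-(1 / 72) : ℝ) (1 / 72),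
      ∃ cb ∈ Icc (-(1 / 72) : ℝ) (1 / 72), ∃ cg ∈ Icc (-(1 / 72) : ℝ) (1 / 72),
        probOf n w (fun i => v i α = 0 ∧ v i β = 0 ∧ v i γ = 0) = 1 / 3 - 8 * c ∧
        (∀ σ ∈ ({-1, 1} : Set ℝ),
          probOf n w (fun i => v i α = σ ∧ v i β = 0 ∧ v i γ = 0) =
            1 / 18 + 4 * c + 4 * σ * ca ∧
          probOf n w (fun i => v i β = σ ∧ v i α = 0 ∧ v i γ = 0) =
            1 / 18 + 4 * c + 4 * σ * cb ∧
          probOf n w (fun i => v i γ = σ ∧ v i α = 0 ∧ v i β = 0) =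
            1 / 18 + 4 * c + 4 * σ * cg) ∧
        (∀ σ1 ∈ ({-1, 1} : Set ℝ), ∀ σ2 ∈ ({-1, 1} : Set ℝ),
          probOf n w (fun i => v i α = σ1 ∧ v i β = σ2 ∧ v i γ = 0) =
            1 / 36 - 2 * c - 2 * σ1 * ca - 2 * σ2 * cb ∧
          probOf n w (fun i => v i α = σ1 ∧ v i γ = σ2 ∧ v i β = 0) =
            1 / 36 - 2 * c - 2 * σ1 * ca - 2 * σ2 * cg ∧
          probOf n w (fun i => v i β = σ1 ∧ v i γ = σ2 ∧ v i α = 0) =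
            1 / 36 - 2 * c - 2 * σ1 * cb - 2 * σ2 * cg) ∧
        (∀ σ1 ∈ ({-1, 1} : Set ℝ), ∀ σ2 ∈ ({-1, 1} : Set ℝ), ∀ σ3 ∈ ({-1, 1} : Set ℝ),
          probOf n w (fun i => v i α = σ1 ∧ v i β = σ2 ∧ v i γ = σ3) =
            c + σ1 * ca + σ2 * cb + σ3 * cg)) :
    IsoLattice 3 n v w (Real.sqrt 3)⁻¹ := by
  obtain ⟨c, -, ca, -, cb, -, cg, -, H0, H1, H2, H3⟩ :=
    h3 0 1 2 (by decide) (by decide) (by decide)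
  have hcell : ∀ s ∈ trit, ∀ t ∈ trit, ∀ u ∈ trit,
      probOf n w (fun i => v i 0 = s ∧ v i 1 = t ∧ v i 2 = u) =
        tripleLaw c ![ca, cb, cg] ![s, t, u] := by
    simp only [Set.forall_mem_insert, Set.mem_singleton_iff, forall_eq, probOf_coords_reorder]
      at H1 H2 H3
    simp only [trit, Finset.mem_insert, Finset.mem_singleton]
    rintro s (rfl | rfl | rfl) t (rfl | rfl | rfl) u (rfl | rfl | rfl) <;>
      simp only [H0, H1, H2, H3] <;>
      simp [tripleLaw, Fin.prod_univ_three, Fin.sum_univ_three, d1q3Weight, zeroSumProfile] <;>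
      ring
  have hgrid (i : Fin (n + 1)) : (v i).ofLp ∈ grid3 :=
    Fintype.mem_piFinset.2 fun k => by simpa [trit] using hval i k
  have hmoment {r : ℕ} (α : Fin r → Fin 3) (hr : r ≤ 4) :
      ∑ i, w i * ∏ j, v i (α j) = d3q27Moment α :=
    sum_mul_prod_eq_d3q27Moment w _ hgrid c _ (probOf_eq_tripleLaw w _ c _ hcell) α hr
  have hcs2 : (√3)⁻¹ ^ 2 = (1 / 3 : ℝ) := by simp
  have hcs4 : (√3)⁻¹ ^ 4 = (1 / 9 : ℝ) := by
    rw [show 4 = 2 * 2 from rfl, pow_mul, hcs2]; norm_num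
  refine ⟨by positivity, hw, hv0, hinj, hsum, fun α => ?_, fun α β => ?_, fun α β γ => ?_,
    fun α β γ ζ => ?_⟩
  · rw [← d3q27Moment_one α, ← hmoment ![α] (by norm_num)]
    simp
  · rw [hcs2, ← d3q27Moment_two, ← hmoment ![α, β] (by norm_num)]
    simp [Fin.prod_univ_two]
  · rw [← d3q27Moment_three α β γ, ← hmoment ![α, β, γ] (by norm_num)]
    simp [Fin.prod_univ_three]
  · rw [hcs4, ← d3q27Moment_four, ← hmoment ![α, β, γ, ζ] (by norm_num)]
    simp [Fin.prod_univ_four]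

theorem threeD_lattice_isotropic_of_law (n : ℕ)
    (v : Fin (n + 1) → Spc 3) (w : Fin (n + 1) → ℝ)
    -- (𝒱, w) is a lattice …
    (hw : ∀ i, 0 < w i) (hsum : ∑ i, w i = 1) (hv0 : v 0 = 0)
    (hinj : Function.Injective v)
    -- … whose velocity components take values in {-1,0,1}
    (hval : ∀ i, ∀ α : Fin 3, v i α ∈ ({-1, 0, 1} : Set ℝ))
    -- single-variable and pair laws
    (h1 : ∀ α : Fin 3,
      probOf n w (fun i => v i α = 0) = 2 / 3 ∧
      probOf n w (fun i => v i α = 1) = 1 / 6 ∧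
      probOf n w (fun i => v i α = -1) = 1 / 6)
    (h2 : ∀ α β : Fin 3, α ≠ β →
      probOf n w (fun i => v i α = 0 ∧ v i β = 0) = 4 / 9 ∧
      (∀ σ ∈ ({-1, 1} : Set ℝ),
        probOf n w (fun i => v i α = σ ∧ v i β = 0) = 1 / 9) ∧
      (∀ σ1 ∈ ({-1, 1} : Set ℝ), ∀ σ2 ∈ ({-1, 1} : Set ℝ),
        probOf n w (fun i => v i α = σ1 ∧ v i β = σ2) = 1 / 36))
    -- triple laws, for some constants c, c_α, c_β, c_γ
    (h3 : ∀ α β γ : Fin 3, α ≠ β → α ≠ γ → β ≠ γ →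
      ∃ c ∈ Icc (0 : ℝ) (1 / 72), ∃ ca ∈ Icc (-(1 / 72) : ℝ) (1 / 72),
      ∃ cb ∈ Icc (-(1 / 72) : ℝ) (1 / 72), ∃ cg ∈ Icc (-(1 / 72) : ℝ) (1 / 72),
        probOf n w (fun i => v i α = 0 ∧ v i β = 0 ∧ v i γ = 0) = 1 / 3 - 8 * c ∧
        (∀ σ ∈ ({-1, 1} : Set ℝ),
          probOf n w (fun i => v i α = σ ∧ v i β = 0 ∧ v i γ = 0) =
            1 / 18 + 4 * c + 4 * σ * ca ∧
          probOf n w (fun i => v i β = σ ∧ v i α = 0 ∧ v i γ = 0) =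
            1 / 18 + 4 * c + 4 * σ * cb ∧
          probOf n w (fun i => v i γ = σ ∧ v i α = 0 ∧ v i β = 0) =
            1 / 18 + 4 * c + 4 * σ * cg) ∧
        (∀ σ1 ∈ ({-1, 1} : Set ℝ), ∀ σ2 ∈ ({-1, 1} : Set ℝ),
          probOf n w (fun i => v i α = σ1 ∧ v i β = σ2 ∧ v i γ = 0) =
            1 / 36 - 2 * c - 2 * σ1 * ca - 2 * σ2 * cb ∧
          probOf n w (fun i => v i α = σ1 ∧ v i γ = σ2 ∧ v i β = 0) =
            1 / 36 - 2 * c - 2 * σ1 * ca - 2 * σ2 * cg ∧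
          probOf n w (fun i => v i β = σ1 ∧ v i γ = σ2 ∧ v i α = 0) =
            1 / 36 - 2 * c - 2 * σ1 * cb - 2 * σ2 * cg) ∧
        (∀ σ1 ∈ ({-1, 1} : Set ℝ), ∀ σ2 ∈ ({-1, 1} : Set ℝ), ∀ σ3 ∈ ({-1, 1} : Set ℝ),
          probOf n w (fun i => v i α = σ1 ∧ v i β = σ2 ∧ v i γ = σ3) =
            c + σ1 * ca + σ2 * cb + σ3 * cg)) :
    IsoLattice 3 n v w (Real.sqrt 3)⁻¹ :=
  threeD_lattice_isotropic_of_law_general n v w hw hsum hv0 hinj hval h3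

end
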